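/- Let x, y, u ∈ D₀ with ψ₀(‖x − x*‖) < 1, ψ₀(‖y − x*‖) < 1 and ψ₀(‖u − x*‖) < 1, so that T′(x), T′(y) and T′(u) are invertible, set b = ‖u − x*‖ and v = u − (2T′(y)⁻¹ − T′(x)⁻¹)T(u). Then ‖v − x*‖ ≤ [ (∫₀¹ ψ((1−t)b) dt)/(1 − ψ₀(b)) + ( (ψ(‖y − x*‖) + ψ(b))/(1 − ψ₀(b)) + (ψ(‖y − x*‖) + ψ(‖x − x*‖))/(1 − ψ₀(‖x − x*‖)) ) · (∫₀¹(ψ₀(t b) + 1) dt)/(1 − ψ₀(‖y − x*‖)) ] · b. -/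

import Mathlib

/-!
Write `v - x* = (u - x* - T'(u)⁻¹ T(u)) + (T'(u)⁻¹ - T'(y)⁻¹) T(u) + (T'(x)⁻¹ - T'(y)⁻¹) T(u)`.
The first term is the error of a Newton step from `u`: integrating `T'` along the segment from
`x*` to `u` bounds it by `‖T'(u)⁻¹ T'(x*)‖ ∫₀¹ ψ((1-t)b) dt · b`. The other two are differences of
inverses, `B - B' = B (S' - S) B'`, which after normalising by `T'(x*)` are bounded through
`ψ`-continuity (via `x*`), the same integral representation of `T'(x*)⁻¹ T(u)` with the
center condition, and the Banach perturbation bound `‖T'(z)⁻¹ T'(x*)‖ ≤ 1 / (1 - ψ₀(‖z - x*‖))`.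
-/

open Set intervalIntegral

namespace ContinuousLinearMap

variable {𝕜 X Y : Type*} [NontriviallyNormedField 𝕜] [NormedAddCommGroup X] [NormedSpace 𝕜 X]
  [NormedAddCommGroup Y] [NormedSpace 𝕜 Y]

theorem norm_le_inv_one_sub_of_comp_eq_id {C M : X →L[𝕜] X}
    (hCM : C ∘L M = ContinuousLinearMap.id 𝕜 X) {ε : ℝ}
    (hC : ‖ContinuousLinearMap.id 𝕜 X - C‖ ≤ ε) (hε : ε < 1) : ‖M‖ ≤ (1 - ε)⁻¹ := by
  have hM : M = ContinuousLinearMap.id 𝕜 X + (ContinuousLinearMap.id 𝕜 X - C) ∘L M := by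
    rw [sub_comp, id_comp, hCM]; abel
  have : ‖M‖ ≤ 1 + ε * ‖M‖ := calc
    ‖M‖ = ‖ContinuousLinearMap.id 𝕜 X + (ContinuousLinearMap.id 𝕜 X - C) ∘L M‖ := congrArg _ hM
    _ ≤ ‖ContinuousLinearMap.id 𝕜 X‖ + ‖ContinuousLinearMap.id 𝕜 X - C‖ * ‖M‖ :=
      (norm_add_le _ _).trans (add_le_add_right (opNorm_comp_le _ _) _)
    _ ≤ 1 + ε * ‖M‖ := by gcongr; exact norm_id_le
  rw [← one_div, le_div_iff₀ (by linarith)]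
  linarith

theorem norm_comp_le_of_norm_comp_sub_le {A : Y →L[𝕜] X} {S S' : X →L[𝕜] Y} {B : Y →L[𝕜] X}
    (hA : A ∘L S = ContinuousLinearMap.id 𝕜 X) (hB : S' ∘L B = ContinuousLinearMap.id 𝕜 Y)
    {ε : ℝ} (hS' : ‖A ∘L (S' - S)‖ ≤ ε) (hε : ε < 1) : ‖B ∘L S‖ ≤ (1 - ε)⁻¹ :=
  -- `B ∘L S` is a right inverse of `A ∘L S'`, which lies within `ε` of the identity.
  norm_le_inv_one_sub_of_comp_eq_id (C := A ∘L S')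
    (by rw [comp_assoc, ← comp_assoc S', hB, id_comp, hA])
    (by rwa [comp_sub, hA, ← norm_neg, neg_sub] at hS') hε

theorem norm_comp_le_add_one {A : Y →L[𝕜] X} {S₀ S : X →L[𝕜] Y}
    (hA : A ∘L S₀ = ContinuousLinearMap.id 𝕜 X) {δ : ℝ} (hS : ‖A ∘L (S - S₀)‖ ≤ δ) :
    ‖A ∘L S‖ ≤ δ + 1 := calc
  ‖A ∘L S‖ = ‖A ∘L (S - S₀) + ContinuousLinearMap.id 𝕜 X‖ := by rw [comp_sub, hA, sub_add_cancel]
  _ ≤ δ + 1 := (norm_add_le _ _).trans (add_le_add hS norm_id_le)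

theorem norm_comp_sub_le_add {A : Y →L[𝕜] X} {S₀ S S' : X →L[𝕜] Y} {δ δ' : ℝ}
    (hS : ‖A ∘L (S - S₀)‖ ≤ δ) (hS' : ‖A ∘L (S₀ - S')‖ ≤ δ') : ‖A ∘L (S - S')‖ ≤ δ + δ' := calc
  ‖A ∘L (S - S')‖ = ‖A ∘L (S - S₀) + A ∘L (S₀ - S')‖ := by
    rw [← comp_add, sub_add_sub_cancel]
  _ ≤ δ + δ' := (norm_add_le _ _).trans (add_le_add hS hS')

theorem comp_comp_comp_eq_id {A : Y →L[𝕜] X} {S₀ S : X →L[𝕜] Y} {B : Y →L[𝕜] X}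
    (hA : S₀ ∘L A = ContinuousLinearMap.id 𝕜 Y) (hB : B ∘L S = ContinuousLinearMap.id 𝕜 X) :
    (B ∘L S₀) ∘L (A ∘L S) = ContinuousLinearMap.id 𝕜 X := by
  rw [comp_assoc, ← comp_assoc S₀, hA, id_comp, hB]

theorem sub_eq_comp_sub_comp {B B' : Y →L[𝕜] X} {S S' : X →L[𝕜] Y}
    (hB : B ∘L S = ContinuousLinearMap.id 𝕜 X) (hB' : S' ∘L B' = ContinuousLinearMap.id 𝕜 Y) :
    B - B' = B ∘L ((S' - S) ∘L B') := by
  rw [sub_comp, hB', comp_sub, comp_id, ← comp_assoc, hB, id_comp]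

theorem norm_sub_apply_le {A : Y →L[𝕜] X} {S₀ S S' : X →L[𝕜] Y} {B B' : Y →L[𝕜] X}
    (hA : S₀ ∘L A = ContinuousLinearMap.id 𝕜 Y) (hB : B ∘L S = ContinuousLinearMap.id 𝕜 X)
    (hB' : S' ∘L B' = ContinuousLinearMap.id 𝕜 Y) {β δ β' ω : ℝ}
    (hβ : ‖B ∘L S₀‖ ≤ β) (hδ : ‖A ∘L (S' - S)‖ ≤ δ) (hβ' : ‖B' ∘L S₀‖ ≤ β') (w : Y)
    (hω : ‖A w‖ ≤ ω) : ‖(B - B') w‖ ≤ β * δ * β' * ω := by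
  have hSA : ∀ z, S₀ (A z) = z := DFunLike.congr_fun hA
  have key : (B - B') w = (B ∘L S₀) ((A ∘L (S' - S)) ((B' ∘L S₀) (A w))) := by
    simp only [sub_eq_comp_sub_comp hB hB', comp_apply, hSA]
  have hβ0 := (norm_nonneg _).trans hβ
  have hδ0 := (norm_nonneg _).trans hδ
  have hβ'0 := (norm_nonneg _).trans hβ'
  rw [key, mul_assoc, mul_assoc]
  refine (le_opNorm _ _).trans (mul_le_mul hβ ?_ (norm_nonneg _) hβ0)
  refine (le_opNorm _ _).trans (mul_le_mul hδ ?_ (norm_nonneg _) hδ0)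
  exact (le_opNorm _ _).trans (mul_le_mul hβ' hω (norm_nonneg _) hβ'0)

end ContinuousLinearMap

open AffineMap MeasureTheory

theorem intervalIntegral.norm_integral_apply_le_integral_mul {E F : Type*}
    [NormedAddCommGroup E] [NormedSpace ℝ E] [NormedAddCommGroup F] [NormedSpace ℝ F]
    {L : ℝ → E →L[ℝ] F} {g : ℝ → ℝ} (hg : IntervalIntegrable g volume 0 1)
    (hL : ∀ t ∈ Icc (0 : ℝ) 1, ‖L t‖ ≤ g t) (v : E) :
    ‖∫ t in (0 : ℝ)..1, L t v‖ ≤ (∫ t in (0 : ℝ)..1, g t) * ‖v‖ := by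
  rw [← integral_mul_const]
  refine norm_integral_le_of_norm_le zero_le_one (ae_of_all _ fun t ht => ?_) (hg.mul_const _)
  exact (L t).le_of_opNorm_le (hL t (Ioc_subset_Icc_self ht)) v

theorem norm_lineMap_sub_left {E : Type*} [NormedAddCommGroup E] [NormedSpace ℝ E] (a b : E)
    {t : ℝ} (ht : 0 ≤ t) : ‖lineMap a b t - a‖ = t * ‖b - a‖ := by
  rw [← dist_eq_norm, dist_lineMap_left, Real.norm_of_nonneg ht, dist_comm, dist_eq_norm]

theorem norm_sub_lineMap {E : Type*} [NormedAddCommGroup E] [NormedSpace ℝ E] (a b : E)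
    {t : ℝ} (ht : t ≤ 1) : ‖b - lineMap a b t‖ = (1 - t) * ‖b - a‖ := by
  rw [← dist_eq_norm, dist_right_lineMap, Real.norm_of_nonneg (sub_nonneg.2 ht), dist_comm,
    dist_eq_norm]

theorem MonotoneOn.intervalIntegrable_comp_mul {φ : ℝ → ℝ} (hφ : MonotoneOn φ (Ici 0)) {b : ℝ}
    (hb : 0 ≤ b) : IntervalIntegrable (fun t => φ (t * b)) volume 0 1 := by
  refine MonotoneOn.intervalIntegrable fun s hs t ht hst => hφ ?_ ?_ (by gcongr)
  all_goals rw [uIcc_of_le (zero_le_one' ℝ)] at hs ht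
  · exact mul_nonneg hs.1 hb
  · exact mul_nonneg ht.1 hb

theorem MonotoneOn.intervalIntegrable_comp_one_sub_mul {φ : ℝ → ℝ} (hφ : MonotoneOn φ (Ici 0))
    {b : ℝ} (hb : 0 ≤ b) : IntervalIntegrable (fun t => φ ((1 - t) * b)) volume 0 1 := by
  refine AntitoneOn.intervalIntegrable fun s hs t ht hst => hφ ?_ ?_ (by gcongr)
  all_goals rw [uIcc_of_le (zero_le_one' ℝ)] at hs ht
  · exact mul_nonneg (sub_nonneg.2 ht.2) hb
  · exact mul_nonneg (sub_nonneg.2 hs.2) hb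

namespace Convex

variable {E F : Type*} [NormedAddCommGroup E] [NormedSpace ℝ E] [NormedAddCommGroup F]
  [NormedSpace ℝ F] {f : E → F} {f' : E → E →L[ℝ] F} {s : Set E} {a b : E}

theorem intervalIntegrable_fderiv_lineMap (hs : Convex ℝ s) (hf' : ContinuousOn f' s)
    (ha : a ∈ s) (hb : b ∈ s) :
    IntervalIntegrable (fun t => f' (lineMap a b t) (b - a)) volume 0 1 := by
  refine ContinuousOn.intervalIntegrable ?_
  rw [uIcc_of_le zero_le_one]
  exact (hf'.comp lineMap_continuous.continuousOn fun t ht => hs.lineMap_mem ha hb ht).clm_apply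
    continuousOn_const

variable [CompleteSpace F]

theorem sub_eq_integral_fderiv_lineMap (hs : Convex ℝ s) (hf : ∀ x ∈ s, HasFDerivAt f (f' x) x)
    (hf' : ContinuousOn f' s) (ha : a ∈ s) (hb : b ∈ s) :
    f b - f a = ∫ t in (0 : ℝ)..1, f' (lineMap a b t) (b - a) := by
  have hderiv : ∀ t ∈ uIcc (0 : ℝ) 1,
      HasDerivAt (fun t => f (lineMap a b t)) (f' (lineMap a b t) (b - a)) t := fun t ht =>
    (hf _ (hs.lineMap_mem ha hb (uIcc_of_le (zero_le_one' ℝ) ▸ ht))).comp_hasDerivAt t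
      hasDerivAt_lineMap
  rw [integral_eq_sub_of_hasDerivAt hderiv (hs.intervalIntegrable_fderiv_lineMap hf' ha hb)]
  simp

theorem norm_sub_le_integral_mul (hs : Convex ℝ s) (hf : ∀ x ∈ s, HasFDerivAt f (f' x) x)
    (hf' : ContinuousOn f' s) (ha : a ∈ s) (hb : b ∈ s) {g : ℝ → ℝ}
    (hg : IntervalIntegrable g volume 0 1)
    (hfg : ∀ t ∈ Icc (0 : ℝ) 1, ‖f' (lineMap a b t)‖ ≤ g t) :
    ‖f b - f a‖ ≤ (∫ t in (0 : ℝ)..1, g t) * ‖b - a‖ := by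
  rw [hs.sub_eq_integral_fderiv_lineMap hf hf' ha hb]
  exact norm_integral_apply_le_integral_mul hg hfg _

theorem norm_sub_sub_apply_sub_le (hs : Convex ℝ s) (hf : ∀ x ∈ s, HasFDerivAt f (f' x) x)
    (hf' : ContinuousOn f' s) (ha : a ∈ s) (hb : b ∈ s) {M : F →L[ℝ] E}
    (hM : M ∘L f' b = ContinuousLinearMap.id ℝ E) {μ : ℝ} (hμ : ‖M‖ ≤ μ) {g : ℝ → ℝ}
    (hg : IntervalIntegrable g volume 0 1)
    (hfg : ∀ t ∈ Icc (0 : ℝ) 1, ‖f' b - f' (lineMap a b t)‖ ≤ g t) :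
    ‖b - a - M (f b - f a)‖ ≤ μ * ((∫ t in (0 : ℝ)..1, g t) * ‖b - a‖) := by
  have key :
      b - a - M (f b - f a) = M (∫ t in (0 : ℝ)..1, (f' b - f' (lineMap a b t)) (b - a)) := by
    simp only [sub_apply]
    rw [integral_sub intervalIntegrable_const (hs.intervalIntegrable_fderiv_lineMap hf' ha hb),
      ← hs.sub_eq_integral_fderiv_lineMap hf hf' ha hb, intervalIntegral.integral_const, map_sub]
    simp [← ContinuousLinearMap.comp_apply, hM]
  rw [key]
  exact (M.le_opNorm _).trans (mul_le_mul hμ (norm_integral_apply_le_integral_mul hg hfg _)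
    (norm_nonneg _) ((norm_nonneg _).trans hμ))

end Convex

/-- The domain `D₀ = D ∩ B(c, ρ₀)` with `ρ₀ = sup {t ≥ 0 | φ t < 1}`. -/
def restrictedDomain {X : Type*} [NormedAddCommGroup X] (D : Set X) (φ : ℝ → ℝ) (c : X) :
    Set X :=
  {z | z ∈ D ∧ ∃ t : ℝ, 0 ≤ t ∧ φ t < 1 ∧ ‖z - c‖ < t}

theorem mem_restrictedDomain_of_norm_sub_le {X : Type*} [NormedAddCommGroup X] {D : Set X}
    {φ : ℝ → ℝ} {c u w : X} (hu : u ∈ restrictedDomain D φ c) (hw : w ∈ D)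
    (hwu : ‖w - c‖ ≤ ‖u - c‖) : w ∈ restrictedDomain D φ c :=
  let ⟨_, t, ht0, ht1, hut⟩ := hu
  ⟨hw, t, ht0, ht1, hwu.trans_lt hut⟩

open ContinuousLinearMap in
theorem third_substep_estimate_general
    {X Y : Type*} [NormedAddCommGroup X] [NormedSpace ℝ X] [CompleteSpace X]
    [NormedAddCommGroup Y] [NormedSpace ℝ Y]
    (D : Set X) (hDconv : Convex ℝ D)
    (T : X → Y) (T' : X → X →L[ℝ] Y)
    (hT : ∀ x ∈ D, HasFDerivAt T (T' x) x)
    (hT'cont : ContinuousOn T' D)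
    (xs : X) (hxs : xs ∈ D) (hTxs : T xs = 0)
    (A : Y →L[ℝ] X)
    (hA1 : A.comp (T' xs) = ContinuousLinearMap.id ℝ X)
    (hA2 : (T' xs).comp A = ContinuousLinearMap.id ℝ Y)
    (ψ0 ψ : ℝ → ℝ)
    (hψ0mono : MonotoneOn ψ0 (Ici 0))
    (hψmono : MonotoneOn ψ (Ici 0))
    (hcenter : ∀ x ∈ D, ‖A.comp (T' x - T' xs)‖ ≤ ψ0 ‖x - xs‖)
    -- `D₀ = D ∩ B(x*, ρ₀)` where `ρ₀ = sup {t ≥ 0 : ψ₀ t < 1}`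
    (D0 : Set X)
    (hD0 : D0 = {w | w ∈ D ∧ ∃ t : ℝ, 0 ≤ t ∧ ψ0 t < 1 ∧ ‖w - xs‖ < t})
    (hrestricted : ∀ w ∈ D0, ∀ w' ∈ D0, ‖A.comp (T' w - T' w')‖ ≤ ψ ‖w - w'‖)
    (x : X) (hx : x ∈ D0) (y : X) (hy : y ∈ D0) (u : X) (hu : u ∈ D0)
    (hltx : ψ0 ‖x - xs‖ < 1) (hlty : ψ0 ‖y - xs‖ < 1) (hltu : ψ0 ‖u - xs‖ < 1)
    (Bx : Y →L[ℝ] X)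
    (hBx1 : Bx.comp (T' x) = ContinuousLinearMap.id ℝ X)
    (hBx2 : (T' x).comp Bx = ContinuousLinearMap.id ℝ Y)
    (By : Y →L[ℝ] X)
    (hBy2 : (T' y).comp By = ContinuousLinearMap.id ℝ Y)
    (Bu : Y →L[ℝ] X)
    (hBu1 : Bu.comp (T' u) = ContinuousLinearMap.id ℝ X)
    (hBu2 : (T' u).comp Bu = ContinuousLinearMap.id ℝ Y)
    (b : ℝ) (hb : b = ‖u - xs‖)
    (v : X) (hv : v = u - ((2 : ℝ) • By - Bx) (T u)) :
    ‖v - xs‖ ≤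
      ((∫ t in (0:ℝ)..1, ψ ((1 - t) * b)) / (1 - ψ0 b) +
        ((ψ ‖y - xs‖ + ψ b) / (1 - ψ0 b) +
          (ψ ‖y - xs‖ + ψ ‖x - xs‖) / (1 - ψ0 ‖x - xs‖)) *
          (∫ t in (0:ℝ)..1, (ψ0 (t * b) + 1)) / (1 - ψ0 ‖y - xs‖)) * b := by
  subst hb hv
  have hD0D : D0 ⊆ D := by rw [hD0]; exact fun w hw => hw.1
  have hnear : ∀ w ∈ D, ‖w - xs‖ ≤ ‖u - xs‖ → w ∈ D0 := by
    rw [hD0] at hu ⊢; exact fun w hw hwu => mem_restrictedDomain_of_norm_sub_le hu hw hwu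
  have hxs0 : xs ∈ D0 := hnear xs hxs (by simp)
  have hseg : ∀ t ∈ Icc (0 : ℝ) 1, lineMap xs u t ∈ D0 := fun t ht =>
    hnear _ (hDconv.lineMap_mem hxs (hD0D hu) ht) <| by
      rw [norm_lineMap_sub_left _ _ ht.1]; exact mul_le_of_le_one_left (norm_nonneg _) ht.2
  have hAT : ∀ z ∈ D, HasFDerivAt (A ∘ T) (A ∘L T' z) z := fun z hz =>
    A.hasFDerivAt.comp z (hT z hz)
  have hAT' : ContinuousOn (fun z => A ∘L T' z) D := continuousOn_const.clm_comp hT'cont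
  have hsplit : ∀ z ∈ D0, ‖A ∘L (T' y - T' z)‖ ≤ ψ ‖y - xs‖ + ψ ‖z - xs‖ := fun z hz =>
    norm_comp_sub_le_add (hrestricted y hy xs hxs0)
      (by simpa only [norm_sub_rev] using hrestricted xs hxs0 z hz)
  have hMu := norm_comp_le_of_norm_comp_sub_le hA1 hBu2 (hcenter u (hD0D hu)) hltu
  have hMy := norm_comp_le_of_norm_comp_sub_le hA1 hBy2 (hcenter y (hD0D hy)) hlty
  have hMx := norm_comp_le_of_norm_comp_sub_le hA1 hBx2 (hcenter x (hD0D hx)) hltx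
  have hATu : ‖A (T u)‖ ≤ (∫ t in (0:ℝ)..1, (ψ0 (t * ‖u - xs‖) + 1)) * ‖u - xs‖ := by
    simpa [hTxs] using hDconv.norm_sub_le_integral_mul hAT hAT' hxs (hD0D hu)
      ((hψ0mono.intervalIntegrable_comp_mul (norm_nonneg _)).add intervalIntegrable_const)
      fun t ht => norm_comp_le_add_one hA1 <| by
        simpa only [norm_lineMap_sub_left _ _ ht.1] using hcenter _ (hD0D (hseg t ht))
  have hN1 : ‖u - xs - Bu (T u)‖ ≤
      (1 - ψ0 ‖u - xs‖)⁻¹ * ((∫ t in (0:ℝ)..1, ψ ((1 - t) * ‖u - xs‖)) * ‖u - xs‖) := by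
    have hSA : ∀ w, T' xs (A w) = w := DFunLike.congr_fun hA2
    simpa [hTxs, hSA] using hDconv.norm_sub_sub_apply_sub_le hAT hAT' hxs (hD0D hu)
      (comp_comp_comp_eq_id hA2 hBu1) hMu
      (hψmono.intervalIntegrable_comp_one_sub_mul (norm_nonneg _)) fun t ht => by
        simpa only [← comp_sub, norm_sub_lineMap _ _ ht.2] using hrestricted u hu _ (hseg t ht)
  have hN2 := norm_sub_apply_le hA2 hBu1 hBy2 hMu (hsplit u hu) hMy (T u) hATu
  have hN3 := norm_sub_apply_le hA2 hBx1 hBy2 hMx (hsplit x hx) hMy (T u) hATu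
  calc ‖u - ((2 : ℝ) • By - Bx) (T u) - xs‖
      = ‖(u - xs - Bu (T u)) + ((Bu - By) (T u) + (Bx - By) (T u))‖ := by
        congr 1; simp only [sub_apply, smul_apply]; module
    _ ≤ _ :=
      (norm_add_le _ _).trans (add_le_add hN1 ((norm_add_le _ _).trans (add_le_add hN2 hN3)))
    _ = _ := by ring

/-- Estimate for the step `v = u - (2 T'(y)⁻¹ - T'(x)⁻¹) T(u)`. -/
theorem third_substep_estimate
    {X Y : Type*} [NormedAddCommGroup X] [NormedSpace ℝ X] [CompleteSpace X]
    [NormedAddCommGroup Y] [NormedSpace ℝ Y] [CompleteSpace Y]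
    (D : Set X) (hD : IsOpen D) (hDconv : Convex ℝ D)
    (T : X → Y) (T' : X → X →L[ℝ] Y)
    (hT : ∀ x ∈ D, HasFDerivAt T (T' x) x)
    (hT'cont : ContinuousOn T' D)
    (xs : X) (hxs : xs ∈ D) (hTxs : T xs = 0)
    (A : Y →L[ℝ] X)
    (hA1 : A.comp (T' xs) = ContinuousLinearMap.id ℝ X)
    (hA2 : (T' xs).comp A = ContinuousLinearMap.id ℝ Y)
    (ψ0 ψ : ℝ → ℝ)
    (hψ0cont : ContinuousOn ψ0 (Ici 0)) (hψ0mono : MonotoneOn ψ0 (Ici 0))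
    (hψ0zero : ψ0 0 = 0) (hψ0nonneg : ∀ t, 0 ≤ t → 0 ≤ ψ0 t)
    (hψcont : ContinuousOn ψ (Ici 0)) (hψmono : MonotoneOn ψ (Ici 0))
    (hψzero : ψ 0 = 0) (hψnonneg : ∀ t, 0 ≤ t → 0 ≤ ψ t)
    (hcenter : ∀ x ∈ D, ‖A.comp (T' x - T' xs)‖ ≤ ψ0 ‖x - xs‖)
    -- `D₀ = D ∩ B(x*, ρ₀)` where `ρ₀ = sup {t ≥ 0 : ψ₀ t < 1}`
    (D0 : Set X)
    (hD0 : D0 = {w | w ∈ D ∧ ∃ t : ℝ, 0 ≤ t ∧ ψ0 t < 1 ∧ ‖w - xs‖ < t})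
    (hrestricted : ∀ w ∈ D0, ∀ w' ∈ D0, ‖A.comp (T' w - T' w')‖ ≤ ψ ‖w - w'‖)
    (x : X) (hx : x ∈ D0) (y : X) (hy : y ∈ D0) (u : X) (hu : u ∈ D0)
    (hltx : ψ0 ‖x - xs‖ < 1) (hlty : ψ0 ‖y - xs‖ < 1) (hltu : ψ0 ‖u - xs‖ < 1)
    (Bx : Y →L[ℝ] X)
    (hBx1 : Bx.comp (T' x) = ContinuousLinearMap.id ℝ X)
    (hBx2 : (T' x).comp Bx = ContinuousLinearMap.id ℝ Y)
    (By : Y →L[ℝ] X)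
    (hBy1 : By.comp (T' y) = ContinuousLinearMap.id ℝ X)
    (hBy2 : (T' y).comp By = ContinuousLinearMap.id ℝ Y)
    (Bu : Y →L[ℝ] X)
    (hBu1 : Bu.comp (T' u) = ContinuousLinearMap.id ℝ X)
    (hBu2 : (T' u).comp Bu = ContinuousLinearMap.id ℝ Y)
    (b : ℝ) (hb : b = ‖u - xs‖)
    (v : X) (hv : v = u - ((2 : ℝ) • By - Bx) (T u)) :
    ‖v - xs‖ ≤
      ((∫ t in (0:ℝ)..1, ψ ((1 - t) * b)) / (1 - ψ0 b) +
        ((ψ ‖y - xs‖ + ψ b) / (1 - ψ0 b) +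
          (ψ ‖y - xs‖ + ψ ‖x - xs‖) / (1 - ψ0 ‖x - xs‖)) *
          (∫ t in (0:ℝ)..1, (ψ0 (t * b) + 1)) / (1 - ψ0 ‖y - xs‖)) * b :=
  third_substep_estimate_general D hDconv T T' hT hT'cont xs hxs hTxs A hA1 hA2 ψ0 ψ hψ0mono hψmono
    hcenter D0 hD0 hrestricted x hx y hy u hu hltx hlty hltu Bx hBx1 hBx2 By hBy2 Bu hBu1 hBu2 b hb
    v hv
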